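/- Let G be a biconnected graph, e = (x,y) an edge with G−e biconnected, and {P₁, P₂} an x-y flow of value 2 in G−e. Let e_i and e_j be edges of P₁ such that, traversing P₁ from x to y, e_i occurs strictly before e_j, and let w, w' be internal vertices of P₂ such that {e_i, w} and {e_j, w'} are both mixed x-y cuts in G−e. Suppose additionally there exists a path P in G−e, internally vertex-disjoint from P₁ and P₂, whose one endpoint lies on P₁ strictly between e_i and e_j and whose other endpoint v lies in the interior of P₂. Then w occurs no later than v and v occurs no later than w' in the traversal of P₂ from x to y; in particular w occurs no later than w'. -/

import Mathlib

/-!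
Each inequality comes from one detour around a cut edge. The walk `P₁[x..p₀] · P · P₂[v..y]`
leaves `P₁` before `e_j` and meets `P₁ ∪ P₂` only in `p₀` and `v`, so it avoids `e_j` and must
pass through `w'`; as `w'` lies neither on `P₁` nor inside `P`, it lies on `P₂[v..y]`.
Symmetrically `P₂[x..v] · P⁻¹ · P₁[p₀..y]` avoids `e_i`, which puts `w` on `P₂[x..v]`.
-/

open SimpleGraph

/-- A graph is `ρ`-vertex-connected if it has more than `ρ` vertices and deleting
any fewer than `ρ` vertices leaves it connected. -/
def KConnected {V : Type*} [Fintype V] (G : SimpleGraph V) (ρ : ℕ) : Prop :=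
  ρ < Fintype.card V ∧
    ∀ S : Finset V, S.card < ρ → (G.induce ((↑S : Set V)ᶜ)).Connected

/-- Two walks with the same endpoints are internally vertex-disjoint if every
common vertex is one of the endpoints. -/
def IntDisjoint {V : Type*} {G : SimpleGraph V} {x y : V} (p q : G.Walk x y) : Prop :=
  ∀ v, v ∈ p.support → v ∈ q.support → v = x ∨ v = y

namespace SimpleGraph.Walk

variable {V : Type*} {G : SimpleGraph V} {u v w a b t : V}

theorem mk_notMem_edges_of_forall_mem_eq (p : G.Walk u v) {l : List V}
    (hp : ∀ z ∈ p.support, z ∈ l → z = t) (ha : a ∈ l) (hb : b ∈ l) (hab : a ≠ b) :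
    s(a, b) ∉ p.edges := fun he =>
  hab ((hp a (p.fst_mem_support_of_mem_edges he) ha).trans
    (hp b (p.snd_mem_support_of_mem_edges he) hb).symm)

variable [DecidableEq V]

theorem idxOf_support_start (p : G.Walk u v) : p.support.idxOf u = 0 := by
  cases p <;> simp

theorem idxOf_support_le_length (p : G.Walk u v) (ha : a ∈ p.support) :
    p.support.idxOf a ≤ p.length := by
  have := List.idxOf_lt_length_of_mem ha
  rw [length_support] at this
  omega

theorem IsPath.idxOf_support_end {p : G.Walk u v} (hp : p.IsPath) :
    p.support.idxOf v = p.length :=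
  (hp.getVert_eq_end_iff (p.idxOf_support_le_length p.end_mem_support)).1
    (p.getVert_support_idxOf p.end_mem_support)

theorem mem_support_takeUntil_iff_idxOf_le (p : G.Walk u v) (hw : w ∈ p.support)
    (ha : a ∈ p.support) :
    a ∈ (p.takeUntil w hw).support ↔ p.support.idxOf a ≤ p.support.idxOf w := by
  rw [takeUntil_eq_take, support_copy, support_take, List.mem_take_iff_idxOf_lt ha,
    Nat.lt_succ_iff]

theorem IsPath.idxOf_le_of_mem_support_dropUntil {p : G.Walk u v} (hp : p.IsPath)
    (hw : w ∈ p.support) (ha : a ∈ (p.dropUntil w hw).support) :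
    p.support.idxOf w ≤ p.support.idxOf a := by
  rw [dropUntil_eq_drop, support_copy, drop_support_eq_support_drop_min,
    min_eq_left (p.idxOf_support_le_length hw)] at ha
  by_contra! h
  exact List.disjoint_take_drop hp.support_nodup le_rfl
    ((List.mem_take_iff_idxOf_lt (List.mem_of_mem_drop ha)).2 h) ha

end SimpleGraph.Walk

namespace IntDisjoint

variable {V : Type*} {G : SimpleGraph V} {x y a b : V} {p q : G.Walk x y}

theorem notMem_left (h : IntDisjoint p q) (ha : a ∈ q.support) (hx : a ≠ x) (hy : a ≠ y) :
    a ∉ p.support :=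
  fun hp => (h a hp ha).elim hx hy

theorem notMem_right_of_idxOf_lt [DecidableEq V] (h : IntDisjoint p q) (hp : p.IsPath)
    (hb : b ∈ p.support) (h₀ : 0 < p.support.idxOf a)
    (hab : p.support.idxOf a < p.support.idxOf b) : a ∉ q.support := by
  have hb' := p.idxOf_support_le_length hb
  have ha : a ∈ p.support := List.idxOf_lt_length_iff.1 (by rw [Walk.length_support]; omega)
  refine fun hq => (h a ha hq).elim ?_ ?_ <;> rintro rfl
  · rw [p.idxOf_support_start] at h₀
    omega
  · rw [hp.idxOf_support_end] at hab
    omega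

end IntDisjoint

def IsMixedCut {V : Type*} (H : SimpleGraph V) (x y : V) (f : Sym2 V) (c : V) : Prop :=
  ∀ q : H.Walk x y, f ∈ q.edges ∨ c ∈ q.support

namespace IsMixedCut

variable {V : Type*} {H : SimpleGraph V} {x y m n p₀ v a b c : V}
  {f : Sym2 V} {P₁ P₂ : H.Walk x y} {P : H.Walk p₀ v}

theorem mem_support_append₃ (hcut : IsMixedCut H x y f c) (A : H.Walk x m) (R : H.Walk m n)
    (B : H.Walk n y) (hA : f ∉ A.edges) (hR : f ∉ R.edges) (hB : f ∉ B.edges) :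
    c ∈ A.support ∨ c ∈ R.support ∨ c ∈ B.support := by
  have := hcut (A.append (R.append B))
  simp only [Walk.edges_append, List.mem_append, Walk.mem_support_append_iff] at this
  tauto

variable [DecidableEq V]

theorem idxOf_le_of_detour_after (hcut : IsMixedCut H x y s(a, b) c) (hP₁ : P₁.IsPath)
    (hp₀ : p₀ ∈ P₁.support) (hv : v ∈ P₂.support)
    (hPP₁ : ∀ z ∈ P.support, z ∈ P₁.support → z = p₀)
    (hPP₂ : ∀ z ∈ P.support, z ∈ P₂.support → z = v)
    (hab : s(a, b) ∈ P₁.edges) (hsucc : P₁.support.idxOf b = P₁.support.idxOf a + 1)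
    (hb₂ : b ∉ P₂.support) (hbp : P₁.support.idxOf b ≤ P₁.support.idxOf p₀)
    (hc₁ : c ∉ P₁.support) (hc₂ : c ∈ P₂.support) :
    P₂.support.idxOf c ≤ P₂.support.idxOf v := by
  have hA : s(a, b) ∉ (P₂.takeUntil v hv).edges := fun he =>
    hb₂ (P₂.support_takeUntil_subset_support hv (Walk.snd_mem_support_of_mem_edges _ he))
  have hR : s(a, b) ∉ P.reverse.edges := by
    rw [Walk.edges_reverse, List.mem_reverse]
    exact P.mk_notMem_edges_of_forall_mem_eq hPP₁ (P₁.fst_mem_support_of_mem_edges hab)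
      (P₁.snd_mem_support_of_mem_edges hab) (by rintro rfl; omega)
  have hB : s(a, b) ∉ (P₁.dropUntil p₀ hp₀).edges := fun he => by
    have := hP₁.idxOf_le_of_mem_support_dropUntil hp₀ (Walk.fst_mem_support_of_mem_edges _ he)
    omega
  rcases hcut.mem_support_append₃ _ _ _ hA hR hB with hc | hc | hc
  · exact (P₂.mem_support_takeUntil_iff_idxOf_le hv hc₂).1 hc
  · rw [hPP₂ c (by simpa using hc) hc₂]
  · exact absurd (P₁.support_dropUntil_subset_support hp₀ hc) hc₁

theorem le_idxOf_of_detour_before (hcut : IsMixedCut H x y s(a, b) c) (hP₂ : P₂.IsPath)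
    (hp₀ : p₀ ∈ P₁.support) (hv : v ∈ P₂.support)
    (hPP₁ : ∀ z ∈ P.support, z ∈ P₁.support → z = p₀)
    (hPP₂ : ∀ z ∈ P.support, z ∈ P₂.support → z = v)
    (hab : s(a, b) ∈ P₁.edges) (hsucc : P₁.support.idxOf b = P₁.support.idxOf a + 1)
    (ha₂ : a ∉ P₂.support) (hpa : P₁.support.idxOf p₀ ≤ P₁.support.idxOf a)
    (hc₁ : c ∉ P₁.support) (hc₂ : c ∈ P₂.support) :
    P₂.support.idxOf v ≤ P₂.support.idxOf c := by
  have hA : s(a, b) ∉ (P₁.takeUntil p₀ hp₀).edges := fun he => by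
    have := (P₁.mem_support_takeUntil_iff_idxOf_le hp₀ (P₁.snd_mem_support_of_mem_edges hab)).1
      (Walk.snd_mem_support_of_mem_edges _ he)
    omega
  have hR : s(a, b) ∉ P.edges :=
    P.mk_notMem_edges_of_forall_mem_eq hPP₁ (P₁.fst_mem_support_of_mem_edges hab)
      (P₁.snd_mem_support_of_mem_edges hab) (by rintro rfl; omega)
  have hB : s(a, b) ∉ (P₂.dropUntil v hv).edges := fun he =>
    ha₂ (P₂.support_dropUntil_subset_support hv (Walk.fst_mem_support_of_mem_edges _ he))
  rcases hcut.mem_support_append₃ _ _ _ hA hR hB with hc | hc | hc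
  · exact absurd (P₁.support_takeUntil_subset_support hp₀ hc) hc₁
  · rw [hPP₂ c hc hc₂]
  · exact hP₂.idxOf_le_of_mem_support_dropUntil hv hc

end IsMixedCut

theorem stmt14_general {V : Type*} [DecidableEq V] (G : SimpleGraph V)
    (x y : V)
    -- {P₁, P₂} is an x-y flow of value 2 in G - e
    (P₁ P₂ : (G.deleteEdges {s(x, y)}).Walk x y)
    (hP₁ : P₁.IsPath) (hP₂ : P₂.IsPath) (hdisj : IntDisjoint P₁ P₂)
    -- e_i = (ui,vi) and e_j = (uj,vj) are edges of P₁ (traversed from x to y),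
    -- with e_i strictly before e_j
    (ui vi uj vj : V)
    (hei : s(ui, vi) ∈ P₁.edges) (hej : s(uj, vj) ∈ P₁.edges)
    (hconsi : P₁.support.idxOf vi = P₁.support.idxOf ui + 1)
    (hconsj : P₁.support.idxOf vj = P₁.support.idxOf uj + 1)
    (hij : P₁.support.idxOf vi ≤ P₁.support.idxOf uj)
    -- w, w' are internal vertices of P₂ with {e_i, w} and {e_j, w'} mixed x-y
    -- cuts in G - e
    (w w' : V) (hw : w ∈ P₂.support) (hwx : w ≠ x) (hwy : w ≠ y)
    (hw' : w' ∈ P₂.support) (hw'x : w' ≠ x) (hw'y : w' ≠ y)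
    (hcutw : ∀ p : (G.deleteEdges {s(x, y)}).Walk x y,
      s(ui, vi) ∈ p.edges ∨ w ∈ p.support)
    (hcutw' : ∀ p : (G.deleteEdges {s(x, y)}).Walk x y,
      s(uj, vj) ∈ p.edges ∨ w' ∈ p.support)
    -- P is a path in G - e, internally vertex-disjoint from P₁ and P₂, with one
    -- endpoint p₀ on P₁ strictly between e_i and e_j, and the other endpoint v
    -- in the interior of P₂
    (p₀ v : V) (hp₀ : p₀ ∈ P₁.support)
    (hp₀l : P₁.support.idxOf vi ≤ P₁.support.idxOf p₀)
    (hp₀r : P₁.support.idxOf p₀ ≤ P₁.support.idxOf uj)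
    (hvP₂ : v ∈ P₂.support) (hvx : v ≠ x) (hvy : v ≠ y)
    (P : (G.deleteEdges {s(x, y)}).Walk p₀ v)
    (hint : ∀ z ∈ P.support, z ≠ p₀ → z ≠ v → z ∉ P₁.support ∧ z ∉ P₂.support) :
    P₂.support.idxOf w ≤ P₂.support.idxOf v ∧
      P₂.support.idxOf v ≤ P₂.support.idxOf w' := by
  have hvj : vj ∈ P₁.support := P₁.snd_mem_support_of_mem_edges hej
  have hinner {a : V} (h₀ : P₁.support.idxOf vi ≤ P₁.support.idxOf a)
      (h₁ : P₁.support.idxOf a ≤ P₁.support.idxOf uj) : a ∉ P₂.support :=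
    hdisj.notMem_right_of_idxOf_lt hP₁ hvj (by omega) (by omega)
  have hv₁ : v ∉ P₁.support := hdisj.notMem_left hvP₂ hvx hvy
  have hPP₁ : ∀ z ∈ P.support, z ∈ P₁.support → z = p₀ := fun z hz hz₁ => by
    by_contra hzp
    exact (hint z hz hzp (by rintro rfl; exact hv₁ hz₁)).1 hz₁
  have hPP₂ : ∀ z ∈ P.support, z ∈ P₂.support → z = v := fun z hz hz₂ => by
    by_contra hzv
    exact (hint z hz (by rintro rfl; exact hinner hp₀l hp₀r hz₂) hzv).2 hz₂
  exact ⟨IsMixedCut.idxOf_le_of_detour_after hcutw hP₁ hp₀ hvP₂ hPP₁ hPP₂ hei hconsi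
      (hinner le_rfl hij) hp₀l (hdisj.notMem_left hw hwx hwy) hw,
    IsMixedCut.le_idxOf_of_detour_before hcutw' hP₂ hp₀ hvP₂ hPP₁ hPP₂ hej hconsj
      (hinner hij le_rfl) hp₀r (hdisj.notMem_left hw' hw'x hw'y) hw'⟩

theorem stmt14 {V : Type*} [Fintype V] [DecidableEq V] (G : SimpleGraph V)
    (x y : V) (hadj : G.Adj x y)
    (hG : KConnected G 2) (hGe : KConnected (G.deleteEdges {s(x, y)}) 2)
    -- {P₁, P₂} is an x-y flow of value 2 in G - e
    (P₁ P₂ : (G.deleteEdges {s(x, y)}).Walk x y)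
    (hP₁ : P₁.IsPath) (hP₂ : P₂.IsPath) (hdisj : IntDisjoint P₁ P₂)
    -- e_i = (ui,vi) and e_j = (uj,vj) are edges of P₁ (traversed from x to y),
    -- with e_i strictly before e_j
    (ui vi uj vj : V)
    (hei : s(ui, vi) ∈ P₁.edges) (hej : s(uj, vj) ∈ P₁.edges)
    (hconsi : P₁.support.idxOf vi = P₁.support.idxOf ui + 1)
    (hconsj : P₁.support.idxOf vj = P₁.support.idxOf uj + 1)
    (hij : P₁.support.idxOf vi ≤ P₁.support.idxOf uj)
    -- w, w' are internal vertices of P₂ with {e_i, w} and {e_j, w'} mixed x-y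
    -- cuts in G - e
    (w w' : V) (hw : w ∈ P₂.support) (hwx : w ≠ x) (hwy : w ≠ y)
    (hw' : w' ∈ P₂.support) (hw'x : w' ≠ x) (hw'y : w' ≠ y)
    (hcutw : ∀ p : (G.deleteEdges {s(x, y)}).Walk x y,
      s(ui, vi) ∈ p.edges ∨ w ∈ p.support)
    (hcutw' : ∀ p : (G.deleteEdges {s(x, y)}).Walk x y,
      s(uj, vj) ∈ p.edges ∨ w' ∈ p.support)
    -- P is a path in G - e, internally vertex-disjoint from P₁ and P₂, with one
    -- endpoint p₀ on P₁ strictly between e_i and e_j, and the other endpoint v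
    -- in the interior of P₂
    (p₀ v : V) (hp₀ : p₀ ∈ P₁.support)
    (hp₀l : P₁.support.idxOf vi ≤ P₁.support.idxOf p₀)
    (hp₀r : P₁.support.idxOf p₀ ≤ P₁.support.idxOf uj)
    (hvP₂ : v ∈ P₂.support) (hvx : v ≠ x) (hvy : v ≠ y)
    (P : (G.deleteEdges {s(x, y)}).Walk p₀ v) (hP : P.IsPath)
    (hint : ∀ z ∈ P.support, z ≠ p₀ → z ≠ v → z ∉ P₁.support ∧ z ∉ P₂.support) :
    P₂.support.idxOf w ≤ P₂.support.idxOf v ∧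
      P₂.support.idxOf v ≤ P₂.support.idxOf w' :=
  stmt14_general G x y P₁ P₂ hP₁ hP₂ hdisj ui vi uj vj hei hej hconsi hconsj hij w w' hw hwx hwy hw'
    hw'x hw'y hcutw hcutw' p₀ v hp₀ hp₀l hp₀r hvP₂ hvx hvy P hint
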